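/- arXiv:1306.6534 — 4 statements merged into one kernel-verified Lean document; each statement's English description precedes it below -/
import Mathlib

section
/- The space CF is path-connected. -/
/-- The set `CF_n ⊆ ℝ^n`: nondecreasing tuples with `t_{i+2} - t_i ≥ 1`. -/
def CFset (n : ℕ) : Set (Fin n → ℝ) :=
  {t | Monotone t ∧ ∀ (i : ℕ) (h : i + 2 < n), 1 ≤ t ⟨i + 2, h⟩ - t ⟨i, by omega⟩}

/-- `CF_n` as a topological space (subspace of `ℝ^n`). -/
abbrev CFn (n : ℕ) := ↥(CFset n)

/-- The disjoint union `⨿_{n ≥ 1} CF_n`. -/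
abbrev PreCF := (n : ℕ) × CFn (n + 1)

/-- Duplication of the `i`-th entry of a tuple. -/
def dup {n : ℕ} (t : Fin (n + 1) → ℝ) (i : Fin (n + 1)) : Fin (n + 2) → ℝ :=
  Fin.insertNth i.castSucc (t i) t

/-- The identification: a tuple is related to the result of duplicating one of its
entries, whenever the duplicated tuple still lies in the relevant `CF_{n+1}`. -/
def CFrel : PreCF → PreCF → Prop := fun x y =>
  ∃ (i : Fin (x.1 + 1)) (h : dup (x.2 : Fin (x.1 + 1) → ℝ) i ∈ CFset (x.1 + 2)),
    y = ⟨x.1 + 1, ⟨dup (x.2 : Fin (x.1 + 1) → ℝ) i, h⟩⟩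

/-- Belk's space `CF`: the quotient of `⨿ CF_n` by the identifications. -/
abbrev CF := Quot CFrel

/-- A basepoint of `CF`: the one-point configuration `(1)`. -/
def CFbase : CF :=
  Quot.mk CFrel ⟨0, ⟨fun _ => 1, ⟨monotone_const, fun i h => absurd h (by omega)⟩⟩⟩

lemma cfset_convex (n : ℕ) : Convex ℝ (CFset n) := by
  intro x hx y hy a b ha hb hab
  refine ⟨fun i j hij => ?_, fun i h => ?_⟩
  · simp only [Pi.add_apply, Pi.smul_apply, smul_eq_mul]
    have := hx.1 hij
    have := hy.1 hij
    nlinarith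
  · have h1 := hx.2 i h
    have h2 := hy.2 i h
    simp only [Pi.add_apply, Pi.smul_apply, smul_eq_mul]
    nlinarith

def cfpt (n : ℕ) : Fin (n + 1) → ℝ := fun i => (i : ℕ)

lemma cfpt_mem (n : ℕ) : cfpt n ∈ CFset (n + 1) := by
  refine ⟨fun i j hij => ?_, fun i h => ?_⟩
  · simp only [cfpt]; exact_mod_cast hij
  · simp only [cfpt]; push_cast; linarith

lemma dup_cfpt_zero (n : ℕ) : dup (cfpt n) 0 = fun j : Fin (n + 2) => ((j.val - 1 : ℕ) : ℝ) := by
  funext j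
  simp only [dup]
  rcases Fin.eq_zero_or_eq_succ j with rfl | ⟨k, rfl⟩
  · simp [Fin.castSucc_zero, cfpt]
  · have : (0 : Fin (n+1)).castSucc = 0 := rfl
    rw [this]
    simp [Fin.insertNth_zero, cfpt]

lemma dup_cfpt_mem (n : ℕ) : dup (cfpt n) 0 ∈ CFset (n + 2) := by
  rw [dup_cfpt_zero]
  refine ⟨fun i j hij => ?_, fun i h => ?_⟩
  · have hij' : (i : ℕ) ≤ j := hij
    show ((i.val - 1 : ℕ) : ℝ) ≤ ((j.val - 1 : ℕ) : ℝ)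
    exact_mod_cast Nat.sub_le_sub_right hij' 1
  · show (1 : ℝ) ≤ ((i + 2 - 1 : ℕ) : ℝ) - ((i - 1 : ℕ) : ℝ)
    have : (i - 1 : ℕ) + 1 ≤ i + 2 - 1 := by omega
    have h2 : ((i - 1 : ℕ) : ℝ) + 1 ≤ ((i + 2 - 1 : ℕ) : ℝ) := by exact_mod_cast this
    linarith

lemma joined_map {X Y : Type*} [TopologicalSpace X] [TopologicalSpace Y] {x y : X}
    {f : X → Y} (h : Joined x y) (hf : Continuous f) : Joined (f x) (f y) :=
  ⟨h.somePath.map hf⟩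

def CFmk (n : ℕ) : CFn (n + 1) → CF := fun t => Quot.mk CFrel ⟨n, t⟩

lemma CFmk_continuous (n : ℕ) : Continuous (CFmk n) :=
  continuous_quot_mk.comp continuous_sigmaMk

lemma joined_in_fiber (n : ℕ) (s t : CFn (n + 1)) : Joined s t := by
  have hpc : IsPathConnected (CFset (n + 1)) :=
    (cfset_convex (n + 1)).isPathConnected ⟨_, cfpt_mem n⟩
  exact ((hpc.joinedIn s s.2 t t.2).joined_subtype)

lemma joined_to_base : ∀ (x : PreCF), Joined (Quot.mk CFrel x) CFbase := by
  rintro ⟨n, t⟩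
  induction n with
  | zero =>
    exact joined_map (f := CFmk 0) (joined_in_fiber 0 t ⟨fun _ => 1, ⟨monotone_const, fun i h => absurd h (by omega)⟩⟩)
      (CFmk_continuous 0)
  | succ n ih =>
    have h1 : Joined (CFmk (n+1) t) (CFmk (n+1) ⟨dup (cfpt n) 0, dup_cfpt_mem n⟩) :=
      joined_map (f := CFmk (n+1)) (joined_in_fiber (n+1) t _) (CFmk_continuous (n+1))
    have h2 : CFmk (n+1) ⟨dup (cfpt n) 0, dup_cfpt_mem n⟩ = CFmk n ⟨cfpt n, cfpt_mem n⟩ := by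
      refine (Quot.sound ?_).symm
      exact ⟨0, dup_cfpt_mem n, rfl⟩
    rw [h2] at h1
    exact h1.trans (ih ⟨cfpt n, cfpt_mem n⟩)

/-- Belk's space `CF` is path-connected. -/
theorem CF_pathConnected : PathConnectedSpace CF := by
  refine ⟨⟨CFbase⟩, fun x y => ?_⟩
  induction x using Quot.ind with | mk a =>
  induction y using Quot.ind with | mk b =>
  exact (joined_to_base a).trans (joined_to_base b).symm
end

section
/- Let ℓ ≥ 1 and let ε_1, …, ε_ℓ be real numbers with 0 ≤ ε_i ≤ 1 for all i. Define L_i = i + Σ_{j<i} ε_j and R_i = L_i + ε_i for 1 ≤ i ≤ ℓ, and let u = (L_1, R_1, L_2, R_2, …, L_ℓ, R_ℓ) ∈ ℝ^{2ℓ} be the interleaved tuple. Then u is nondecreasing; u_{k+2} − u_k ≥ 1 for all 1 ≤ k ≤ 2ℓ−2 (so u ∈ CF_{2ℓ}); u_1 = 1; u_{k+1} − u_k ≤ 1 for all 1 ≤ k ≤ 2ℓ−1; and whenever u_{k+1} − u_k < 1, one has u_k − u_{k−1} = 1 (if k ≥ 2) and u_{k+2} − u_{k+1} = 1 (if k ≤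 2ℓ−2). In particular u satisfies the defining conditions of the subspace DF. -/
/-- Given weights `0 ≤ ε_i ≤ 1` for `1 ≤ i ≤ ℓ`, set `L_i = i + Σ_{1 ≤ j < i} ε_j`,
`R_i = L_i + ε_i`, and let `u = (L_1, R_1, …, L_ℓ, R_ℓ)` be the interleaved `2ℓ`-tuple
(so `u_{2i-1} = L_i` and `u_{2i} = R_i`).  Then `u` is nondecreasing, satisfies
`u_{k+2} - u_k ≥ 1` (so `u ∈ CF_{2ℓ}`), has `u_1 = 1`, has consecutive differences
at most `1`, and whenever `u_{k+1} - u_k < 1` the neighboring differences equal `1`;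
i.e. `u` satisfies the defining conditions of the subspace `DF`. -/
theorem interleaved_tuple_mem_DF (ℓ : ℕ) (hℓ : 1 ≤ ℓ) (ε : ℕ → ℝ)
    (hε : ∀ i, 1 ≤ i → i ≤ ℓ → 0 ≤ ε i ∧ ε i ≤ 1)
    (L R : ℕ → ℝ)
    (hL : ∀ i, 1 ≤ i → i ≤ ℓ → L i = (i : ℝ) + ∑ j ∈ Finset.Ico 1 i, ε j)
    (hR : ∀ i, 1 ≤ i → i ≤ ℓ → R i = L i + ε i)
    (u : ℕ → ℝ)
    (hu : ∀ i, 1 ≤ i → i ≤ ℓ → u (2 * i - 1) = L i ∧ u (2 * i) = R i) :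
    (∀ k, 1 ≤ k → k + 1 ≤ 2 * ℓ → u k ≤ u (k + 1)) ∧
    (∀ k, 1 ≤ k → k + 2 ≤ 2 * ℓ → 1 ≤ u (k + 2) - u k) ∧
    u 1 = 1 ∧
    (∀ k, 1 ≤ k → k + 1 ≤ 2 * ℓ → u (k + 1) - u k ≤ 1) ∧
    (∀ k, 1 ≤ k → k + 1 ≤ 2 * ℓ → u (k + 1) - u k < 1 →
      (2 ≤ k → u k - u (k - 1) = 1) ∧ (k + 2 ≤ 2 * ℓ → u (k + 2) - u (k + 1) = 1)) := by
  -- odd-position difference equals ε i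
  have hodd : ∀ i, 1 ≤ i → i ≤ ℓ → u (2 * i) - u (2 * i - 1) = ε i := by
    intro i h1 h2
    obtain ⟨ha, hb⟩ := hu i h1 h2
    rw [ha, hb, hR i h1 h2]; ring
  -- even-position difference equals 1
  have heven : ∀ i, 1 ≤ i → i + 1 ≤ ℓ → u (2 * i + 1) - u (2 * i) = 1 := by
    intro i h1 h2
    have h2' : i ≤ ℓ := by omega
    obtain ⟨_, hb⟩ := hu i h1 h2'
    have ha := (hu (i + 1) (by omega) h2).1
    have e : 2 * (i + 1) - 1 = 2 * i + 1 := by omega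
    rw [e] at ha
    rw [ha, hb, hR i h1 h2', hL i h1 h2', hL (i + 1) (by omega) h2,
      Finset.sum_Ico_succ_top h1]
    push_cast; ring
  -- even k ⇒ difference is exactly 1
  have hone : ∀ k, 1 ≤ k → k + 1 ≤ 2 * ℓ → Even k → u (k + 1) - u k = 1 := by
    intro k h1 h2 ⟨i, hi⟩
    have hk : k = 2 * i := by omega
    subst hk
    exact heven i (by omega) (by omega)
  -- general difference bounds
  have hdiff : ∀ k, 1 ≤ k → k + 1 ≤ 2 * ℓ →
      0 ≤ u (k + 1) - u k ∧ u (k + 1) - u k ≤ 1 := by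
    intro k h1 h2
    rcases Nat.even_or_odd k with he | ⟨i, hi⟩
    · rw [hone k h1 h2 he]; norm_num
    · have e1 : k + 1 = 2 * (i + 1) := by omega
      have e2 : k = 2 * (i + 1) - 1 := by omega
      have hε' := hε (i + 1) (by omega) (by omega)
      have := hodd (i + 1) (by omega) (by omega)
      rw [e1, e2]
      constructor <;> linarith [this, hε'.1, hε'.2]
  refine ⟨fun k h1 h2 => by linarith [(hdiff k h1 h2).1],
    ?_, ?_, fun k h1 h2 => (hdiff k h1 h2).2, ?_⟩
  · intro k h1 h2
    have d1 := hdiff k h1 (by omega)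
    have d2 := hdiff (k + 1) (by omega) (by omega)
    rcases Nat.even_or_odd k with he | ho
    · have := hone k h1 (by omega) he
      linarith [d2.1]
    · have : Even (k + 1) := ho.add_one
      have := hone (k + 1) (by omega) (by omega) this
      have e : k + 1 + 1 = k + 2 := by ring
      rw [e] at this
      linarith [d1.1]
  · have := (hu 1 le_rfl hℓ).1
    norm_num at this
    rw [this, hL 1 le_rfl hℓ]
    simp
  · intro k h1 h2 hlt
    have hko : Odd k := by
      rcases Nat.even_or_odd k with he | ho
      · exfalso; have := hone k h1 h2 he; linarith
      · exact ho
    constructor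
    · intro hk2
      have hev : Even (k - 1) := by
        obtain ⟨i, hi⟩ := hko; exact ⟨i, by omega⟩
      have := hone (k - 1) (by omega) (by omega) hev
      have e : k - 1 + 1 = k := by omega
      rwa [e] at this
    · intro hk2
      have hev : Even (k + 1) := hko.add_one
      have := hone (k + 1) (by omega) (by omega) hev
      have e : k + 1 + 1 = k + 2 := by ring
      rwa [e] at this
end

section
/- The space CF is homotopy equivalent to its subspace DF. -/
/-- The defining conditions of `DF` on a tuple: `t_1 = 1`; consecutive differences are
at most `1`; and whenever a consecutive difference is less than `1`, the neighboring
consecutive differences (when they exist) equal `1`. -/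
def DFcond {n : ℕ} (t : Fin n → ℝ) : Prop :=
  (∀ h : 0 < n, t ⟨0, h⟩ = 1) ∧
  (∀ (i : ℕ) (h : i + 1 < n), t ⟨i + 1, h⟩ - t ⟨i, by omega⟩ ≤ 1) ∧
  (∀ (i : ℕ) (h : i + 1 < n), t ⟨i + 1, h⟩ - t ⟨i, by omega⟩ < 1 →
    (∀ h1 : 1 ≤ i, t ⟨i, by omega⟩ - t ⟨i - 1, by omega⟩ = 1) ∧
    (∀ h2 : i + 2 < n, t ⟨i + 2, h2⟩ - t ⟨i + 1, h⟩ = 1))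

/-- The subspace `DF ⊆ CF` of points representable by a tuple satisfying `DFcond`. -/
def DF : Set CF :=
  {x | ∃ (n : ℕ) (t : Fin (n + 1) → ℝ) (ht : t ∈ CFset (n + 1)),
    DFcond t ∧ x = Quot.mk CFrel ⟨n, ⟨t, ht⟩⟩}

/-!
Record a tuple by its first entry and its gap sequence, continued by gaps `1` past the last
entry. The condition defining `CF` says that gaps are nonnegative and consecutive pairs of gaps
sum to at least `1`, a convex condition; duplicating an entry inserts a gap `0`, which is only
allowed between two gaps `≥ 1`. Translate the first entry to `1`, cap every gap at `1`, and then
raise to `1` every gap that is not strictly smaller than both of its neighbours. The result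
satisfies the `DF` condition, is unchanged on `DF`, and commutes with admissible duplications,
so it descends to a retraction `CF → DF`; the straight-line homotopy from the identity to it
stays in `CF` by convexity and descends as well.
-/

open unitInterval

def ContinuousMap.HomotopyEquiv.ofRetraction {X : Type*} [TopologicalSpace X] {A : Set X}
    (r : C(X, X)) (hr : ∀ x, r x ∈ A) (hrA : ∀ x ∈ A, r x = x)
    (h : (ContinuousMap.id X).Homotopic r) : ContinuousMap.HomotopyEquiv X A where
  toFun := ⟨Set.codRestrict r A hr, r.continuous.codRestrict hr⟩
  invFun := ⟨Subtype.val, continuous_subtype_val⟩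
  left_inv := h.symm
  right_inv := by
    convert ContinuousMap.Homotopic.refl _
    ext x
    exact (hrA x x.2).symm

namespace Belk

def gap (s : ℕ → ℝ) (i : ℕ) : ℝ := s (i + 1) - s i

def ofGaps (x : ℝ) (g : ℕ → ℝ) : ℕ → ℝ
  | 0 => x
  | i + 1 => ofGaps x g i + g i

@[simp] lemma ofGaps_zero (x : ℝ) (g : ℕ → ℝ) : ofGaps x g 0 = x := rfl

@[simp] lemma gap_ofGaps (x : ℝ) (g : ℕ → ℝ) : gap (ofGaps x g) = g := by
  funext i; simp [gap, ofGaps]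

lemma ofGaps_gap (s : ℕ → ℝ) : ofGaps (s 0) (gap s) = s := by
  funext i
  induction i with
  | zero => rfl
  | succ i ih => simp [ofGaps, ih, gap]

lemma eq_of_gap_eq {s s' : ℕ → ℝ} (h0 : s 0 = s' 0) (h : gap s = gap s') : s = s' := by
  rw [← ofGaps_gap s, ← ofGaps_gap s', h0, h]

lemma continuous_gap : Continuous gap :=
  continuous_pi fun i => by unfold gap; fun_prop

lemma continuous_ofGaps (x : ℝ) : Continuous (ofGaps x) := by
  refine continuous_pi fun i => ?_
  induction i with
  | zero => exact continuous_const
  | succ i ih => exact ih.add (continuous_apply i)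

def IsCFGaps (g : ℕ → ℝ) : Prop := ∀ i, 0 ≤ g i ∧ 1 ≤ g i + g (i + 1)

lemma convex_isCFGaps : Convex ℝ {g : ℕ → ℝ | IsCFGaps g} := by
  intro g hg g' hg' a b ha hb hab i
  have := hg i
  have := hg' i
  simp only [Pi.add_apply, Pi.smul_apply, smul_eq_mul]
  constructor <;> nlinarith

/-- The virtual gap `1` left of gap `0` makes the boundary case of `DFcond` uniform with the
others. -/
def prevGap (g : ℕ → ℝ) : ℕ → ℝ
  | 0 => 1
  | i + 1 => g i

def IsDFGaps (g : ℕ → ℝ) : Prop :=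
  ∀ i, g i ≤ 1 ∧ (g i < 1 → prevGap g i = 1 ∧ g (i + 1) = 1)

def insertZero (k : ℕ) (g : ℕ → ℝ) (i : ℕ) : ℝ :=
  if i < k then g i else if i = k then 0 else g (i - 1)

def seqDup (k : ℕ) (s : ℕ → ℝ) (i : ℕ) : ℝ := s (if i ≤ k then i else i - 1)

lemma gap_seqDup (k : ℕ) (s : ℕ → ℝ) : gap (seqDup k s) = insertZero k (gap s) := by
  funext i
  rcases lt_trichotomy i k with h | rfl | h
  · simp [gap, seqDup, insertZero, h, h.le, Nat.succ_le_of_lt h]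
  · simp [gap, seqDup, insertZero]
  · have hi : i - 1 + 1 = i := by omega
    simp [gap, seqDup, insertZero, h.not_ge, h.not_gt, h.ne', hi,
      (h.trans (Nat.lt_succ_self i)).not_ge]

lemma seqDup_ofGaps (k : ℕ) (x : ℝ) (g : ℕ → ℝ) :
    seqDup k (ofGaps x g) = ofGaps x (insertZero k g) := by
  refine eq_of_gap_eq rfl ?_
  rw [gap_seqDup, gap_ofGaps, gap_ofGaps]

lemma IsCFGaps.one_le_of_insertZero {k : ℕ} {g : ℕ → ℝ} (h : IsCFGaps (insertZero k g)) :
    1 ≤ g k ∧ 1 ≤ prevGap g k := by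
  refine ⟨by simpa [insertZero] using (h k).2, ?_⟩
  cases k with
  | zero => exact le_rfl
  | succ k => simpa [insertZero, prevGap] using (h k).2

lemma prevGap_insertZero (k : ℕ) (g : ℕ → ℝ) :
    prevGap (insertZero k g) = insertZero (k + 1) (prevGap g) := by
  funext i
  cases i with
  | zero => simp [prevGap, insertZero]
  | succ i =>
    cases i with
    | zero => cases k <;> simp [prevGap, insertZero]
    | succ i =>
      simp only [prevGap, insertZero]
      split_ifs <;> first | rfl | omega

def capGaps (g : ℕ → ℝ) (i : ℕ) : ℝ := min 1 (g i)

lemma capGaps_le_one (g : ℕ → ℝ) (i : ℕ) : capGaps g i ≤ 1 := min_le_left _ _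

lemma capGaps_of_le_one {g : ℕ → ℝ} (hg : ∀ i, g i ≤ 1) : capGaps g = g :=
  funext fun i => min_eq_right (hg i)

lemma IsCFGaps.capGaps {g : ℕ → ℝ} (hg : IsCFGaps g) : IsCFGaps (capGaps g) := by
  intro i
  obtain ⟨h0, h1⟩ := hg i
  have h0' := (hg (i + 1)).1
  simp only [Belk.capGaps]
  refine ⟨le_min zero_le_one h0, ?_⟩
  rcases le_total 1 (g i) with h | h <;> rcases le_total 1 (g (i + 1)) with h' | h' <;>
    simp [h, h'] <;> linarith

lemma capGaps_insertZero (k : ℕ) (g : ℕ → ℝ) :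
    capGaps (insertZero k g) = insertZero k (capGaps g) := by
  funext i
  simp only [capGaps, insertZero]
  split_ifs <;> simp

lemma prevGap_capGaps (g : ℕ → ℝ) (i : ℕ) :
    prevGap (capGaps g) i = min 1 (prevGap g i) := by
  cases i <;> simp [prevGap, capGaps]

lemma continuous_capGaps : Continuous capGaps :=
  continuous_pi fun i => continuous_const.min (continuous_apply i)

/-- A gap stays below `1` only if it is strictly smaller than both of its neighbours. -/
def raiseGaps (g : ℕ → ℝ) (i : ℕ) : ℝ := min 1 (1 + g i - min (prevGap g i) (g (i + 1)))

lemma raiseGaps_le_one (g : ℕ → ℝ) (i : ℕ) : raiseGaps g i ≤ 1 := min_le_left _ _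

lemma raiseGaps_eq_one {g : ℕ → ℝ} {i : ℕ} (h : min (prevGap g i) (g (i + 1)) ≤ g i) :
    raiseGaps g i = 1 :=
  min_eq_left (by linarith)

lemma le_raiseGaps {g : ℕ → ℝ} (hg : ∀ i, g i ≤ 1) (i : ℕ) : g i ≤ raiseGaps g i :=
  le_min (hg i) (by linarith [min_le_right (prevGap g i) (g (i + 1)), hg (i + 1)])

lemma IsCFGaps.raiseGaps {g : ℕ → ℝ} (hg : IsCFGaps g) (hg1 : ∀ i, g i ≤ 1) :
    IsCFGaps (raiseGaps g) := fun i =>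
  ⟨(hg i).1.trans (le_raiseGaps hg1 i),
    (hg i).2.trans (add_le_add (le_raiseGaps hg1 i) (le_raiseGaps hg1 (i + 1)))⟩

lemma isDFGaps_raiseGaps (g : ℕ → ℝ) : IsDFGaps (raiseGaps g) := by
  intro i
  refine ⟨raiseGaps_le_one g i, fun hlt => ?_⟩
  have hmin : g i < min (prevGap g i) (g (i + 1)) := by
    by_contra! h
    exact hlt.ne (raiseGaps_eq_one h)
  obtain ⟨hprev, hnext⟩ := lt_min_iff.1 hmin
  refine ⟨?_, raiseGaps_eq_one ?_⟩
  · cases i with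
    | zero => rfl
    | succ i => exact raiseGaps_eq_one ((min_le_right _ _).trans hprev.le)
  · exact (min_le_left _ _).trans hnext.le

lemma raiseGaps_of_isDFGaps {g : ℕ → ℝ} (hg : IsDFGaps g) : raiseGaps g = g := by
  funext i
  rcases (hg i).1.lt_or_eq with hlt | heq
  · obtain ⟨hprev, hnext⟩ := (hg i).2 hlt
    simp [raiseGaps, hprev, hnext, hlt.le]
  · rw [heq]
    exact raiseGaps_eq_one (heq ▸ (min_le_right _ _).trans (hg (i + 1)).1)

lemma continuous_raiseGaps : Continuous raiseGaps := by
  refine continuous_pi fun i => continuous_const.min ?_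
  have hprev : Continuous fun g : ℕ → ℝ => prevGap g i := by
    cases i with
    | zero => exact continuous_const
    | succ i => exact continuous_apply i
  exact ((continuous_const.add (continuous_apply i)).sub (hprev.min (continuous_apply (i + 1))))

lemma raiseGaps_insertZero {k : ℕ} {g : ℕ → ℝ} (hk : g k = 1)
    (hprev : prevGap g k = 1) :
    raiseGaps (insertZero k g) = insertZero k (raiseGaps g) := by
  funext i
  rcases lt_trichotomy (i + 1) k with h | rfl | h
  · simp (disch := omega) only [raiseGaps, prevGap_insertZero, insertZero, if_pos, if_neg]
  · have hi : g i = 1 := hprev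
    have hraise : raiseGaps g i = 1 := raiseGaps_eq_one (hi ▸ hk ▸ min_le_right _ _)
    rw [raiseGaps_eq_one, insertZero, if_pos (Nat.lt_succ_self i), hraise]
    simp [prevGap_insertZero, insertZero, hi]
  · obtain rfl | rfl | h' : i = k ∨ i = k + 1 ∨ k + 1 < i := by omega
    · simp (disch := omega) only [raiseGaps, prevGap_insertZero, insertZero, if_neg, ↓reduceIte]
      simp [hprev, hk]
    · have hraise : raiseGaps g k = 1 := raiseGaps_eq_one (hk ▸ hprev ▸ min_le_left _ _)
      rw [raiseGaps_eq_one, insertZero, if_neg (by omega), if_neg (by omega), Nat.add_sub_cancel,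
        hraise]
      simp [prevGap_insertZero, insertZero, hk]
    · simp (disch := omega) only [raiseGaps, prevGap_insertZero, insertZero, if_neg]
      rw [show i + 1 - 1 = i - 1 + 1 by omega]

/-- Gaps `1` past the last entry play the role of the missing right neighbours in `DFcond`. -/
def extend {n : ℕ} (t : Fin (n + 1) → ℝ) (i : ℕ) : ℝ :=
  t ⟨min i n, by omega⟩ + ((i - n : ℕ) : ℝ)

def restrict (n : ℕ) (s : ℕ → ℝ) : Fin (n + 1) → ℝ := fun j => s j

section Extend

variable {n : ℕ} (t : Fin (n + 1) → ℝ)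

lemma extend_of_le {i : ℕ} (h : i ≤ n) : extend t i = t ⟨i, by omega⟩ := by
  simp [extend, min_eq_left h, Nat.sub_eq_zero_of_le h]

@[simp] lemma extend_zero : extend t 0 = t 0 := extend_of_le t (Nat.zero_le n)

@[simp] lemma restrict_extend : restrict n (extend t) = t :=
  funext fun j => extend_of_le t (Nat.lt_succ_iff.1 j.2)

lemma gap_extend_of_lt {i : ℕ} (h : i < n) :
    gap (extend t) i = t ⟨i + 1, by omega⟩ - t ⟨i, by omega⟩ := by
  rw [gap, extend_of_le t h, extend_of_le t h.le]

lemma gap_extend_of_le {i : ℕ} (h : n ≤ i) : gap (extend t) i = 1 := by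
  simp only [gap, extend, min_eq_right h, min_eq_right (h.trans (Nat.le_succ i)),
    Nat.sub_add_comm h]
  push_cast
  ring

lemma isCFGaps_gap_extend (ht : t ∈ CFset (n + 1)) : IsCFGaps (gap (extend t)) := by
  have hgap : ∀ i, 0 ≤ gap (extend t) i := fun i => by
    rcases lt_or_ge i n with h | h
    · rw [gap_extend_of_lt t h]
      exact sub_nonneg.2 (ht.1 (Fin.mk_le_mk.2 (Nat.le_succ i)))
    · rw [gap_extend_of_le t h]
      exact zero_le_one
  refine fun i => ⟨hgap i, ?_⟩
  rcases lt_or_ge (i + 1) n with h | h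
  · rw [gap_extend_of_lt t h, gap_extend_of_lt t (by omega)]
    linarith [ht.2 i (by omega)]
  · rw [gap_extend_of_le t h]
    linarith [hgap i]

lemma isDFGaps_gap_extend (ht : DFcond t) : IsDFGaps (gap (extend t)) := by
  intro i
  rcases lt_or_ge i n with h | h
  · rw [gap_extend_of_lt t h]
    refine ⟨ht.2.1 i (by omega), fun hlt => ?_⟩
    obtain ⟨hprev, hnext⟩ := ht.2.2 i (by omega) hlt
    refine ⟨?_, ?_⟩
    · cases i with
      | zero => rfl
      | succ i => simpa [prevGap, gap_extend_of_lt t (by omega : i < n)] using hprev (by omega)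
    · rcases lt_or_ge (i + 1) n with h' | h'
      · rw [gap_extend_of_lt t h']
        exact hnext (by omega)
      · exact gap_extend_of_le t h'
  · rw [gap_extend_of_le t h]
    exact ⟨le_rfl, fun h => (lt_irrefl _ h).elim⟩

lemma extend_restrict {s : ℕ → ℝ} (hs : ∀ i, n ≤ i → gap s i = 1) :
    extend (restrict n s) = s := by
  refine eq_of_gap_eq (extend_zero _) (funext fun i => ?_)
  rcases lt_or_ge i n with h | h
  · rw [gap_extend_of_lt _ h]
    rfl
  · rw [gap_extend_of_le _ h, hs i h]

lemma continuous_extend : Continuous (extend (n := n)) :=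
  continuous_pi fun i => by unfold extend; fun_prop

end Extend

lemma restrict_mem_CFset {s : ℕ → ℝ} (hs : IsCFGaps (gap s)) (n : ℕ) :
    restrict n s ∈ CFset (n + 1) := by
  have hmono : Monotone s := monotone_nat_of_le_succ fun i => sub_nonneg.1 (hs i).1
  refine ⟨fun _ _ hij => hmono hij, fun i _ => ?_⟩
  have := (hs i).2
  simp only [restrict, gap] at this ⊢
  linarith

lemma dfCond_restrict {s : ℕ → ℝ} (h0 : s 0 = 1) (hs : IsDFGaps (gap s)) (n : ℕ) :
    DFcond (restrict n s) := by
  refine ⟨fun _ => h0, fun i _ => (hs i).1, fun i _ hlt => ?_⟩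
  obtain ⟨hprev, hnext⟩ := (hs i).2 hlt
  refine ⟨fun hi => ?_, fun _ => hnext⟩
  obtain ⟨_, rfl⟩ := Nat.exists_eq_add_of_le' hi
  exact hprev

lemma continuous_restrict (n : ℕ) : Continuous (restrict n) :=
  continuous_pi fun _ => continuous_apply _

lemma dup_eq_comp_predAbove {n : ℕ} (t : Fin (n + 1) → ℝ) (k : Fin (n + 1)) :
    dup t k = t ∘ k.predAbove := by
  rw [dup, Fin.insertNth_eq_iff]
  exact ⟨by simp, funext fun j => by simp [Fin.removeNth, Fin.predAbove_succAbove]⟩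

lemma restrict_seqDup (n : ℕ) (k : Fin (n + 1)) (s : ℕ → ℝ) :
    restrict (n + 1) (seqDup k s) = dup (restrict n s) k := by
  rw [dup_eq_comp_predAbove]
  funext j
  simp only [restrict, seqDup, Function.comp_apply]
  congr 1
  simp only [Fin.predAbove, Fin.lt_def, Fin.val_castSucc]
  split_ifs <;> simp <;> omega

lemma extend_dup {n : ℕ} (t : Fin (n + 1) → ℝ) (k : Fin (n + 1)) :
    extend (dup t k) = seqDup k (extend t) := by
  have h := restrict_seqDup n k (extend t)
  rw [restrict_extend] at h
  rw [← h, extend_restrict]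
  intro i hi
  rw [gap_seqDup, insertZero, if_neg (by omega), if_neg (by omega), gap_extend_of_le t (by omega)]

def ofTuple {n : ℕ} (t : Fin (n + 1) → ℝ) (ht : t ∈ CFset (n + 1)) : CF :=
  Quot.mk CFrel ⟨n, ⟨t, ht⟩⟩

lemma ofTuple_eq_of_eq_dup {n : ℕ} {t : Fin (n + 1) → ℝ} (ht : t ∈ CFset (n + 1))
    (k : Fin (n + 1)) {t' : Fin (n + 2) → ℝ} (ht' : t' ∈ CFset (n + 2)) (h : t' = dup t k) :
    ofTuple t' ht' = ofTuple t ht := by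
  subst h
  exact (Quot.sound ⟨k, ht', rfl⟩).symm

structure CFSeqMap where
  toFun : (ℕ → ℝ) → ℕ → ℝ
  continuous_toFun : Continuous toFun
  isCFGaps_gap : ∀ s, IsCFGaps (gap s) → IsCFGaps (gap (toFun s))
  seqDup_comm : ∀ k s, IsCFGaps (gap (seqDup k s)) → toFun (seqDup k s) = seqDup k (toFun s)

namespace CFSeqMap

variable (R : CFSeqMap)

def lineSeq (a : ℝ) (s : ℕ → ℝ) : ℕ → ℝ := (1 - a) • s + a • R.toFun s

@[simp] lemma lineSeq_zero (s : ℕ → ℝ) : R.lineSeq 0 s = s := by simp [lineSeq]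

@[simp] lemma lineSeq_one (s : ℕ → ℝ) : R.lineSeq 1 s = R.toFun s := by simp [lineSeq]

lemma isCFGaps_gap_lineSeq {a : ℝ} (ha : a ∈ I) {s : ℕ → ℝ} (hs : IsCFGaps (gap s)) :
    IsCFGaps (gap (R.lineSeq a s)) := by
  have h : gap (R.lineSeq a s) = (1 - a) • gap s + a • gap (R.toFun s) := by
    funext i
    simp only [lineSeq, gap, Pi.add_apply, Pi.smul_apply, smul_eq_mul]
    ring
  rw [h]
  exact convex_isCFGaps hs (R.isCFGaps_gap s hs) (by linarith [ha.2]) ha.1 (by ring)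

lemma lineSeq_seqDup (a : ℝ) {k : ℕ} {s : ℕ → ℝ} (hs : IsCFGaps (gap (seqDup k s))) :
    R.lineSeq a (seqDup k s) = seqDup k (R.lineSeq a s) := by
  rw [lineSeq, R.seqDup_comm k s hs]
  rfl

lemma continuous_lineSeq : Continuous fun p : ℝ × (ℕ → ℝ) => R.lineSeq p.1 p.2 := by
  have := R.continuous_toFun
  unfold lineSeq
  fun_prop

def homotopyPiece (n : ℕ) : C(CFn (n + 1), C(I, CF)) :=
  ContinuousMap.curry
    { toFun := fun p => ofTuple (restrict n (R.lineSeq p.2 (extend p.1.1)))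
        (restrict_mem_CFset (R.isCFGaps_gap_lineSeq p.2.2 (isCFGaps_gap_extend _ p.1.2)) n)
      continuous_toFun := by
        refine continuous_quot_mk.comp (continuous_sigmaMk.comp (Continuous.subtype_mk ?_ _))
        exact (continuous_restrict n).comp (R.continuous_lineSeq.comp
          ((continuous_subtype_val.comp continuous_snd).prodMk
            (continuous_extend.comp (continuous_subtype_val.comp continuous_fst)))) }

lemma homotopyPiece_eq_of_rel :
    ∀ x y, CFrel x y → R.homotopyPiece x.1 x.2 = R.homotopyPiece y.1 y.2 := by
  rintro ⟨n, t, ht⟩ _ ⟨k, hd, rfl⟩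
  ext a
  refine (ofTuple_eq_of_eq_dup _ k _ ?_).symm
  rw [extend_dup, R.lineSeq_seqDup _ (extend_dup t k ▸ isCFGaps_gap_extend _ hd), restrict_seqDup]

def homotopy : C(CF × I, CF) :=
  ContinuousMap.uncurry
    ⟨Quot.lift (fun x => R.homotopyPiece x.1 x.2) R.homotopyPiece_eq_of_rel,
      continuous_quot_lift _ (continuous_sigma fun n => (R.homotopyPiece n).continuous)⟩

def toCF : C(CF, CF) := R.homotopy.comp ⟨fun x => (x, 1), by fun_prop⟩

lemma toCF_ofTuple {n : ℕ} (t : Fin (n + 1) → ℝ) (ht : t ∈ CFset (n + 1)) :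
    R.toCF (ofTuple t ht) =
      ofTuple (restrict n (R.toFun (extend t)))
        (restrict_mem_CFset (R.isCFGaps_gap _ (isCFGaps_gap_extend t ht)) n) := by
  change ofTuple (restrict n (R.lineSeq 1 (extend t))) _ = _
  simp only [lineSeq_one]

def homotopyToCF : (ContinuousMap.id CF).Homotopy R.toCF where
  toFun p := R.homotopy (p.2, p.1)
  continuous_toFun := by fun_prop
  map_zero_left x := by
    induction x using Quot.ind with | mk x
    change ofTuple (restrict x.1 (R.lineSeq 0 (extend x.2.1))) _ = _
    simp only [lineSeq_zero, restrict_extend]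
    rfl
  map_one_left _ := rfl

end CFSeqMap

def dfRetraction : CFSeqMap where
  toFun s := ofGaps 1 (raiseGaps (capGaps (gap s)))
  continuous_toFun :=
    (continuous_ofGaps 1).comp (continuous_raiseGaps.comp (continuous_capGaps.comp continuous_gap))
  isCFGaps_gap s hs := by
    rw [gap_ofGaps]
    exact hs.capGaps.raiseGaps (capGaps_le_one _)
  seqDup_comm k s hs := by
    rw [gap_seqDup] at hs ⊢
    obtain ⟨hk, hprev⟩ := hs.one_le_of_insertZero
    rw [capGaps_insertZero, raiseGaps_insertZero (min_eq_left hk)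
      (by rw [prevGap_capGaps, min_eq_left hprev]), seqDup_ofGaps]

lemma dfRetraction_toCF_mem_DF (x : CF) : dfRetraction.toCF x ∈ DF := by
  induction x using Quot.ind with | mk x
  obtain ⟨n, t, ht⟩ := x
  refine ⟨n, _, _, dfCond_restrict (ofGaps_zero _ _) ?_ n, dfRetraction.toCF_ofTuple t ht⟩
  simp only [gap_ofGaps]
  exact isDFGaps_raiseGaps _

lemma dfRetraction_toCF_of_mem_DF {x : CF} (hx : x ∈ DF) : dfRetraction.toCF x = x := by
  obtain ⟨n, t, ht, hdf, rfl⟩ := hx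
  have hgaps := isDFGaps_gap_extend t hdf
  have hfix : dfRetraction.toFun (extend t) = extend t := by
    simp only [dfRetraction, capGaps_of_le_one fun i => (hgaps i).1, raiseGaps_of_isDFGaps hgaps]
    exact eq_of_gap_eq (by simpa using (hdf.1 n.succ_pos).symm) (gap_ofGaps _ _)
  refine (dfRetraction.toCF_ofTuple t ht).trans ?_
  congr 1
  rw [hfix, restrict_extend]

end Belk

/-- Belk's space `CF` is homotopy equivalent to its subspace `DF`. -/
theorem CF_homotopyEquiv_DF : Nonempty (ContinuousMap.HomotopyEquiv CF ↥DF) :=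
  ⟨ContinuousMap.HomotopyEquiv.ofRetraction Belk.dfRetraction.toCF Belk.dfRetraction_toCF_mem_DF
    (fun _ => Belk.dfRetraction_toCF_of_mem_DF) ⟨Belk.dfRetraction.homotopyToCF⟩⟩
end

section
/- Let n ≥ 1 and let (t_1, …, t_n) ∈ ℝ^n be nondecreasing with t_{i+2} − t_i ≥ 2 for all 1 ≤ i ≤ n−2. Define s_1 = 1 and s_{i+1} = s_i + min(t_{i+1} − t_i, 1) for 1 ≤ i ≤ n−1. Then (s_1,…,s_n) is nondecreasing; s_{i+2} − s_i ≥ 1 for all 1 ≤ i ≤ n−2 (so (s_1,…,s_n) ∈ CF_n); s_1 = 1; s_{i+1} − s_i ≤ 1 for all 1 ≤ i ≤ n−1; and whenever s_{i+1} − s_i < 1, one has s_i − s_{i−1} = 1 (if i ≥ 2) and s_{i+2} − s_{i+1} = 1 (if i ≤ n−2). In particular (s_1,…,s_n) satisfies the defining conditions of DF. -/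
/-- Let `(t_1, …, t_n)` be nondecreasing with `t_{i+2} - t_i ≥ 2`.  Define `s_1 = 1`
and `s_{i+1} = s_i + min (t_{i+1} - t_i) 1`.  Then `(s_1, …, s_n)` is nondecreasing,
satisfies `s_{i+2} - s_i ≥ 1` (so it lies in `CF_n`), has `s_1 = 1`, has consecutive
differences at most `1`, and whenever `s_{i+1} - s_i < 1` the neighboring differences
equal `1`; i.e. `(s_1, …, s_n)` satisfies the defining conditions of `DF`. -/
theorem pushed_tuple_mem_DF (n : ℕ) (hn : 1 ≤ n) (t : ℕ → ℝ)
    (hmono : ∀ i, 1 ≤ i → i + 1 ≤ n → t i ≤ t (i + 1))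
    (hgap : ∀ i, 1 ≤ i → i + 2 ≤ n → 2 ≤ t (i + 2) - t i)
    (s : ℕ → ℝ) (hs1 : s 1 = 1)
    (hs : ∀ i, 1 ≤ i → i + 1 ≤ n → s (i + 1) = s i + min (t (i + 1) - t i) 1) :
    (∀ i, 1 ≤ i → i + 1 ≤ n → s i ≤ s (i + 1)) ∧
    (∀ i, 1 ≤ i → i + 2 ≤ n → 1 ≤ s (i + 2) - s i) ∧
    s 1 = 1 ∧
    (∀ i, 1 ≤ i → i + 1 ≤ n → s (i + 1) - s i ≤ 1) ∧
    (∀ i, 1 ≤ i → i + 1 ≤ n → s (i + 1) - s i < 1 →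
      (2 ≤ i → s i - s (i - 1) = 1) ∧ (i + 2 ≤ n → s (i + 2) - s (i + 1) = 1)) := by
  have hd : ∀ i, 1 ≤ i → i + 1 ≤ n → s (i + 1) - s i = min (t (i + 1) - t i) 1 := by
    intro i h1 h2; rw [hs i h1 h2]; ring
  have hnn : ∀ i, 1 ≤ i → i + 1 ≤ n → (0 : ℝ) ≤ min (t (i + 1) - t i) 1 :=
    fun i h1 h2 => le_min (by linarith [hmono i h1 h2]) zero_le_one
  refine ⟨?_, ?_, hs1, ?_, ?_⟩
  · intro i h1 h2
    have := hd i h1 h2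
    have := hnn i h1 h2
    linarith
  · intro i h1 h2
    have e1 := hd i h1 (by omega)
    have e2 : s (i + 2) - s (i + 1) = min (t (i + 2) - t (i + 1)) 1 :=
      hd (i + 1) (by omega) (by omega)
    have g : 2 ≤ t (i + 2) - t i := hgap i h1 h2
    have m1 : min (t (i + 1) - t i) 1 ≤ 1 := min_le_right _ _
    have m2 : min (t (i + 2) - t (i + 1)) 1 ≤ 1 := min_le_right _ _
    have n1 := hnn i h1 (by omega)
    have n2 : (0 : ℝ) ≤ min (t (i + 2) - t (i + 1)) 1 := hnn (i + 1) (by omega) (by omega)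
    have hm := hmono i h1 (by omega)
    rcases le_or_gt 1 (t (i + 1) - t i) with h | h
    · rw [min_eq_right h] at e1; linarith
    · have hb : (1 : ℝ) ≤ t (i + 2) - t (i + 1) := by linarith
      rw [min_eq_right hb] at e2
      rw [min_eq_left h.le] at e1
      linarith
  · intro i h1 h2
    have := hd i h1 h2
    have := min_le_right (t (i + 1) - t i) (1 : ℝ)
    linarith
  · intro i h1 h2 hlt
    have e1 := hd i h1 h2
    have hdi : t (i + 1) - t i < 1 := by
      by_contra hc
      push_neg at hc
      rw [min_eq_right hc] at e1
      linarith
    constructor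
    · intro h2i
      obtain ⟨j, rfl⟩ : ∃ j, i = j + 1 := ⟨i - 1, by omega⟩
      have hg : 2 ≤ t (j + 1 + 1) - t j := hgap j (by omega) (by omega)
      have e' : s (j + 1) - s j = min (t (j + 1) - t j) 1 := hd j (by omega) (by omega)
      simp only [Nat.add_sub_cancel]
      rw [e', min_eq_right (by linarith)]
    · intro h2n
      have hg : 2 ≤ t (i + 2) - t i := hgap i h1 h2n
      have e2 : s (i + 2) - s (i + 1) = min (t (i + 2) - t (i + 1)) 1 :=
        hd (i + 1) (by omega) (by omega)
      rw [e2, min_eq_right (by linarith)]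
end
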